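/- (Chang–Wilson–Wolff inequality) There exist constants c₁, c₂ > 0 such that for every f ∈ L²(ℝ²), every λ > 0 and every 0 < ε < 1, one has |{x ∈ ℝ² : |f(x) − E₀f(x)| > 2λ and Δ(f)(x) < ελ}| ≤ c₂ e^{−c₁/ε²} |{x ∈ ℝ² : sup_{k≥0} |E_k f(x)| > ελ}|. -/

import Mathlib

noncomputable section
open MeasureTheory Filter Metric Set
open scoped ENNReal Real Topology

/-- The plane `ℝ²` with its Euclidean norm. -/
abbrev P2 : Type := EuclideanSpace ℝ (Fin 2)

/-- The dyadic square of side length `2^{-j}` containing `x`. -/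
def dySq (j : ℕ) (x : P2) : Set P2 :=
  {y : P2 | ⌊(2:ℝ)^j * x 0⌋ = ⌊(2:ℝ)^j * y 0⌋ ∧ ⌊(2:ℝ)^j * x 1⌋ = ⌊(2:ℝ)^j * y 1⌋}

/-- Conditional expectation of `f` with respect to the σ-algebra generated by the dyadic
squares of side length `2^{-j}`: `E_j f (x) = |Q|⁻¹ ∫_Q f`, `Q` the dyadic square
of measure `2^{-2j}` containing `x`. -/
def Ej (j : ℕ) (f : P2 → ℝ) (x : P2) : ℝ :=
  ((2:ℝ) ^ (2 * j)) • ∫ y in dySq j x, f y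

/-- The martingale difference `Δ_k f = E_{k+1} f − E_k f`. -/
def Dk (k : ℕ) (f : P2 → ℝ) (x : P2) : ℝ := Ej (k + 1) f x - Ej k f x

/-- The discrete square function `Δ(f)(x) = (Σ_{k ≥ 0} |Δ_k f(x)|²)^{1/2}`,
valued in `ℝ≥0∞`. -/
def sqFn (f : P2 → ℝ) (x : P2) : ℝ≥0∞ :=
  (∑' k : ℕ, (‖Dk k f x‖₊ : ℝ≥0∞) ^ 2) ^ (1/2 : ℝ)

/-!
For real `θ`, the process `exp (θ (E_n f - E_m f) - 4 θ² ∑_{m ≤ k < n} (Δ_k f)²)`, `n ≥ m`, is a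
supermartingale along the dyadic filtration: on a square `Q` of level `n` the four values
`u_i = θ Δ_n f` taken on the children of `Q` sum to zero, and `∑ exp (u_i - 4 u_i²) ≤ 4` for
such numbers. Fatou's lemma together with the dyadic Lebesgue differentiation theorem
`E_n f → f` turns this into the sub-Gaussian estimate
`|U ∩ {∑_{k ≥ m} (Δ_k f)² ≤ s², f - E_m f > t}| ≤ exp (-t² / 16 s²) |U|`
for every union `U` of level-`m` squares (take `θ = t / 8 s²`).

Stopping at the first level `m` where `|E_m f| > s = ελ` splits the maximal set into such
unions. When `ε ≤ 1/3`, a point of the left-hand set lying in the `m`-th piece has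
`|E_m f - E_0 f| ≤ 3s ≤ λ`, hence `|f - E_m f| > λ`, which gives `c₁ = 1/16` and
`c₂ = 2 e^{9/16}`; when `ε > 1/3` the left-hand set lies a.e. inside the maximal set.
-/

namespace Real

lemma exp_sub_four_mul_sq_le_one_add {u : ℝ} (hu : -3 / 4 ≤ u) : exp (u - 4 * u ^ 2) ≤ 1 + u := by
  have hpos : 0 < 1 + u := by linarith
  have hgap : 1 - (1 + u)⁻¹ - (u - 4 * u ^ 2) = u ^ 2 * (3 + 4 * u) / (1 + u) := by
    field_simp
    ring
  have hle : u - 4 * u ^ 2 ≤ 1 - (1 + u)⁻¹ := by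
    rw [← sub_nonneg, hgap]
    exact div_nonneg (mul_nonneg (sq_nonneg u) (by linarith)) hpos.le
  calc exp (u - 4 * u ^ 2) ≤ exp (log (1 + u)) :=
        exp_le_exp.2 (hle.trans (one_sub_inv_le_log_of_pos hpos))
    _ = 1 + u := exp_log hpos

lemma exp_sub_four_mul_sq_le (u : ℝ) : exp (u - 4 * u ^ 2) ≤ 16 / 15 :=
  calc exp (u - 4 * u ^ 2) ≤ exp (1 / 16) := exp_le_exp.2 (by nlinarith [sq_nonneg (u - 1 / 8)])
    _ ≤ 1 / (1 - 1 / 16) := exp_bound_div_one_sub_of_interval (by norm_num) (by norm_num)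
    _ = 16 / 15 := by norm_num

lemma exp_sub_four_mul_sq_lt_half {u : ℝ} (hu : u < -3 / 4) : exp (u - 4 * u ^ 2) < 1 / 2 :=
  (exp_le_exp.2 (by nlinarith)).trans_lt exp_neg_one_lt_half

lemma sum_exp_sub_four_mul_sq_le_card {ι : Type*} (s : Finset ι) (hs : s.card ≤ 8) (u : ι → ℝ)
    (hu : ∑ i ∈ s, u i = 0) : ∑ i ∈ s, exp (u i - 4 * u i ^ 2) ≤ s.card := by
  classical
  by_cases h : ∃ i ∈ s, u i < -3 / 4
  · obtain ⟨i, hi, hui⟩ := h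
    have hrest : ∑ j ∈ s.erase i, exp (u j - 4 * u j ^ 2) ≤ (s.erase i).card * (16 / 15) := by
      simpa using Finset.sum_le_card_nsmul _ _ _ fun j _ => exp_sub_four_mul_sq_le (u j)
    have hcard : ((s.erase i).card : ℝ) + 1 = s.card := by
      exact_mod_cast Finset.card_erase_add_one hi
    have hs' : (s.card : ℝ) ≤ 8 := by exact_mod_cast hs
    rw [← Finset.add_sum_erase s _ hi]
    linarith [exp_sub_four_mul_sq_lt_half hui]
  · push Not at h
    calc ∑ i ∈ s, exp (u i - 4 * u i ^ 2) ≤ ∑ i ∈ s, (1 + u i) :=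
          Finset.sum_le_sum fun i hi => exp_sub_four_mul_sq_le_one_add (h i hi)
      _ = s.card := by simp [Finset.sum_add_distrib, hu]

end Real

namespace ChangWilsonWolff

def dyadicIndex (n : ℕ) (x : P2) : ℤ × ℤ := (⌊(2:ℝ) ^ n * x 0⌋, ⌊(2:ℝ) ^ n * x 1⌋)

def dyadicSquare (n : ℕ) (c : ℤ × ℤ) : Set P2 := dyadicIndex n ⁻¹' {c}

@[simp]
lemma mem_dyadicSquare {n : ℕ} {c : ℤ × ℤ} {x : P2} :
    x ∈ dyadicSquare n c ↔ dyadicIndex n x = c := Iff.rfl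

lemma measurable_dyadicIndex (n : ℕ) : Measurable (dyadicIndex n) := by
  have hcoord (i : Fin 2) : Measurable fun x : P2 => ⌊(2:ℝ) ^ n * x i⌋ :=
    Int.measurable_floor.comp (measurable_const.mul
      ((measurable_pi_apply i).comp (WithLp.measurable_ofLp _ _)))
  exact (hcoord 0).prodMk (hcoord 1)

lemma measurableSet_dyadicSquare (n : ℕ) (c : ℤ × ℤ) : MeasurableSet (dyadicSquare n c) :=
  measurable_dyadicIndex n (measurableSet_singleton c)

lemma dySq_eq_dyadicSquare (n : ℕ) (x : P2) : dySq n x = dyadicSquare n (dyadicIndex n x) := by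
  ext y
  simp [dySq, dyadicIndex, Prod.ext_iff, eq_comm]

lemma iUnion_dyadicSquare (n : ℕ) : ⋃ c, dyadicSquare n c = univ :=
  eq_univ_of_forall fun _ => mem_iUnion.2 ⟨_, rfl⟩

lemma pairwise_disjoint_dyadicSquare (n : ℕ) :
    Pairwise (Function.onFun Disjoint (dyadicSquare n)) :=
  fun _ _ h => disjoint_singleton.2 h |>.preimage _

lemma lintegral_eq_tsum_dyadicSquare (n : ℕ) (F : P2 → ℝ≥0∞) :
    ∫⁻ x, F x = ∑' c, ∫⁻ x in dyadicSquare n c, F x := by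
  rw [← lintegral_iUnion (measurableSet_dyadicSquare n) (pairwise_disjoint_dyadicSquare n),
    iUnion_dyadicSquare, Measure.restrict_univ]

lemma dyadicIndex_eq_div_two (n : ℕ) (x : P2) :
    dyadicIndex n x = ((dyadicIndex (n + 1) x).1 / 2, (dyadicIndex (n + 1) x).2 / 2) := by
  have h (t : ℝ) : ⌊(2:ℝ) ^ n * t⌋ = ⌊(2:ℝ) ^ (n + 1) * t⌋ / (2 : ℕ) := by
    rw [← Int.floor_div_natCast]
    congr 1
    push_cast
    ring
  simp only [dyadicIndex, h]
  rfl

lemma dyadicIndex_eq_of_le {k n : ℕ} (hkn : k ≤ n) {x y : P2}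
    (h : dyadicIndex n x = dyadicIndex n y) : dyadicIndex k x = dyadicIndex k y := by
  induction n, hkn using Nat.le_induction with
  | base => exact h
  | succ n _ ih => exact ih (by rw [dyadicIndex_eq_div_two n x, dyadicIndex_eq_div_two n y, h])

def dyadicChildren (c : ℤ × ℤ) : Finset (ℤ × ℤ) :=
  Finset.Icc (2 * c.1) (2 * c.1 + 1) ×ˢ Finset.Icc (2 * c.2) (2 * c.2 + 1)

lemma mem_dyadicChildren {c d : ℤ × ℤ} : d ∈ dyadicChildren c ↔ (d.1 / 2, d.2 / 2) = c := by
  simp only [dyadicChildren, Finset.mem_product, Finset.mem_Icc, Prod.ext_iff]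
  omega

lemma card_dyadicChildren (c : ℤ × ℤ) : (dyadicChildren c).card = 4 := by
  simp [dyadicChildren, show ∀ a : ℤ, 2 * a + 1 + 1 - 2 * a = 2 from fun a => by ring]

lemma dyadicSquare_eq_biUnion_children (n : ℕ) (c : ℤ × ℤ) :
    dyadicSquare n c = ⋃ d ∈ dyadicChildren c, dyadicSquare (n + 1) d := by
  ext x
  simp [mem_dyadicChildren, dyadicIndex_eq_div_two n x]

lemma dist_le_of_mem_dyadicSquare {n : ℕ} {c : ℤ × ℤ} {x y : P2}
    (hx : x ∈ dyadicSquare n c) (hy : y ∈ dyadicSquare n c) : dist x y ≤ 2 / 2 ^ n := by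
  have hcoord (i : Fin 2) : dist (x i) (y i) ≤ 1 / 2 ^ n := by
    have hfl : ⌊(2:ℝ) ^ n * x i⌋ = ⌊(2:ℝ) ^ n * y i⌋ := by
      have := hx.trans hy.symm
      fin_cases i
      exacts [congrArg Prod.fst this, congrArg Prod.snd this]
    have := Int.abs_sub_lt_one_of_floor_eq_floor hfl
    rw [← mul_sub, abs_mul, abs_of_pos (by positivity)] at this
    rw [Real.dist_eq, le_div_iff₀ (by positivity)]
    linarith
  rw [EuclideanSpace.dist_eq, Real.sqrt_le_left (by positivity), Fin.sum_univ_two]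
  rw [show (2:ℝ) / 2 ^ n = 2 * (1 / 2 ^ n) by ring]
  nlinarith [hcoord 0, hcoord 1, dist_nonneg (x := x 0) (y := y 0),
    dist_nonneg (x := x 1) (y := y 1)]

lemma isBounded_dyadicSquare (n : ℕ) (c : ℤ × ℤ) : Bornology.IsBounded (dyadicSquare n c) :=
  isBounded_iff.2 ⟨_, fun _ hx _ hy => dist_le_of_mem_dyadicSquare hx hy⟩

lemma volume_setOf_coord_mem {s t : Set ℝ} (hs : MeasurableSet s) (ht : MeasurableSet t) :
    volume {y : P2 | y 0 ∈ s ∧ y 1 ∈ t} = volume s * volume t := by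
  have : {y : P2 | y 0 ∈ s ∧ y 1 ∈ t} =
      (MeasurableEquiv.toLp 2 (Fin 2 → ℝ)).symm ⁻¹' univ.pi ![s, t] := by
    ext y
    simp [Fin.forall_fin_two]
  rw [this, (EuclideanSpace.volume_preserving_symm_measurableEquiv_toLp (Fin 2)).measure_preimage
    (MeasurableSet.univ_pi fun i => by fin_cases i <;> assumption).nullMeasurableSet,
    volume_pi_pi, Fin.prod_univ_two]
  rfl

lemma volume_setOf_floor_mul_eq (a : ℝ) (ha : 0 < a) (p : ℤ) :
    volume {t : ℝ | ⌊a * t⌋ = p} = ENNReal.ofReal a⁻¹ := by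
  have : {t : ℝ | ⌊a * t⌋ = p} = (a * ·) ⁻¹' (Int.floor ⁻¹' {p}) := rfl
  rw [this, Real.volume_preimage_mul_left ha.ne', Int.preimage_floor_singleton, Real.volume_Ico,
    abs_of_pos (inv_pos.2 ha)]
  simp

lemma volume_dyadicSquare (n : ℕ) (c : ℤ × ℤ) :
    volume (dyadicSquare n c) = ENNReal.ofReal ((2:ℝ) ^ (2 * n))⁻¹ := by
  have : dyadicSquare n c = {y : P2 | y 0 ∈ {t | ⌊(2:ℝ) ^ n * t⌋ = c.1} ∧
      y 1 ∈ {t | ⌊(2:ℝ) ^ n * t⌋ = c.2}} := by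
    ext y
    simp [dyadicIndex, Prod.ext_iff]
  have hmeas (p : ℤ) : MeasurableSet {t : ℝ | ⌊(2:ℝ) ^ n * t⌋ = p} :=
    (Int.measurable_floor.comp (measurable_const_mul _)) (measurableSet_singleton p)
  rw [this, volume_setOf_coord_mem (hmeas _) (hmeas _), volume_setOf_floor_mul_eq _ (by positivity),
    volume_setOf_floor_mul_eq _ (by positivity), ← ENNReal.ofReal_mul (by positivity), ← mul_inv,
    ← pow_add, two_mul]

def IsDyadicMeasurable {α : Type*} (n : ℕ) (g : P2 → α) : Prop :=
  ∀ ⦃x y⦄, dyadicIndex n x = dyadicIndex n y → g x = g y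

lemma IsDyadicMeasurable.mono {α : Type*} {k n : ℕ} {g : P2 → α} (hg : IsDyadicMeasurable k g)
    (hkn : k ≤ n) : IsDyadicMeasurable n g :=
  fun _ _ h => hg (dyadicIndex_eq_of_le hkn h)

lemma IsDyadicMeasurable.measurable {β : Type*} [MeasurableSpace β] {n : ℕ} {g : P2 → β}
    (hg : IsDyadicMeasurable n g) : Measurable g := by
  intro T _
  convert measurable_dyadicIndex n (Set.to_countable (dyadicIndex n '' (g ⁻¹' T))).measurableSet
  ext x
  exact ⟨fun hx => ⟨x, hx, rfl⟩, fun ⟨y, hy, hyx⟩ => show g x ∈ T from hg hyx ▸ hy⟩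

lemma IsDyadicMeasurable.measurableSet {n : ℕ} {U : Set P2} (hU : IsDyadicMeasurable n (· ∈ U)) :
    MeasurableSet U :=
  measurableSet_setOfPred.2 hU.measurable

def dyadicAverage (n : ℕ) (f : P2 → ℝ) (c : ℤ × ℤ) : ℝ :=
  (2:ℝ) ^ (2 * n) * ∫ y in dyadicSquare n c, f y

lemma Ej_eq_dyadicAverage (n : ℕ) (f : P2 → ℝ) (x : P2) :
    Ej n f x = dyadicAverage n f (dyadicIndex n x) := by
  rw [Ej, dySq_eq_dyadicSquare, smul_eq_mul, dyadicAverage]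

lemma isDyadicMeasurable_Ej (n : ℕ) (f : P2 → ℝ) : IsDyadicMeasurable n (Ej n f) :=
  fun x y h => by rw [Ej_eq_dyadicAverage, Ej_eq_dyadicAverage, h]

lemma isDyadicMeasurable_Dk (k : ℕ) (f : P2 → ℝ) : IsDyadicMeasurable (k + 1) (Dk k f) :=
  fun _ _ h => by
    rw [Dk, Dk, isDyadicMeasurable_Ej _ f h, (isDyadicMeasurable_Ej k f).mono k.le_succ h]

variable {f : P2 → ℝ}

lemma _root_.MeasureTheory.LocallyIntegrable.integrableOn_dyadicSquare
    (hf : LocallyIntegrable f volume) (n : ℕ) (c : ℤ × ℤ) : IntegrableOn f (dyadicSquare n c) :=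
  (hf.integrableOn_isCompact (isBounded_dyadicSquare n c).isCompact_closure).mono_set
    subset_closure

lemma sum_dyadicAverage_children (hf : LocallyIntegrable f volume) (n : ℕ) (c : ℤ × ℤ) :
    ∑ d ∈ dyadicChildren c, dyadicAverage (n + 1) f d = 4 * dyadicAverage n f c := by
  simp only [dyadicAverage, ← Finset.mul_sum]
  rw [← integral_biUnion_finset _ (fun d _ => measurableSet_dyadicSquare _ d)
    (fun d _ d' _ h => pairwise_disjoint_dyadicSquare _ h)
    (fun d _ => hf.integrableOn_dyadicSquare _ d), ← dyadicSquare_eq_biUnion_children]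
  ring

lemma Dk_eq_of_mem_dyadicSquare {n : ℕ} {c d : ℤ × ℤ} (hd : d ∈ dyadicChildren c) {x : P2}
    (hx : x ∈ dyadicSquare (n + 1) d) :
    Dk n f x = dyadicAverage (n + 1) f d - dyadicAverage n f c := by
  have hxc : dyadicIndex n x = c := by
    rw [dyadicIndex_eq_div_two, mem_dyadicSquare.1 hx, mem_dyadicChildren.1 hd]
  rw [Dk, Ej_eq_dyadicAverage, Ej_eq_dyadicAverage, mem_dyadicSquare.1 hx, hxc]

lemma abs_Ej_sub_le (hf : LocallyIntegrable f volume) (n : ℕ) (x : P2) :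
    |Ej n f x - f x| ≤ 16 * ⨍ y in closedBall x (2 / 2 ^ n), ‖f y - f x‖ := by
  set Q := dyadicSquare n (dyadicIndex n x)
  set B := closedBall x (2 / 2 ^ n)
  have hQB : Q ⊆ B := fun y hy => mem_closedBall.2 (dist_le_of_mem_dyadicSquare hy rfl)
  have hQ : volume.real Q = ((2:ℝ) ^ (2 * n))⁻¹ := by
    rw [measureReal_def, volume_dyadicSquare, ENNReal.toReal_ofReal (by positivity)]
  have hB : volume.real B = 4 * π / (2:ℝ) ^ (2 * n) := by
    rw [measureReal_def, EuclideanSpace.volume_closedBall_fin_two, ENNReal.toReal_mul,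
      ENNReal.toReal_pow, ENNReal.toReal_ofReal (by positivity),
      ENNReal.toReal_ofReal Real.pi_pos.le]
    ring
  have hintB : IntegrableOn (fun y => ‖f y - f x‖) B :=
    ((hf.integrableOn_isCompact (isCompact_closedBall x _)).sub
      (integrableOn_const measure_closedBall_lt_top.ne)).norm
  have hEj : Ej n f x - f x = (2:ℝ) ^ (2 * n) * ∫ y in Q, (f y - f x) := by
    rw [integral_sub (hf.integrableOn_dyadicSquare n _)
      (integrableOn_const (by rw [volume_dyadicSquare]; exact ENNReal.ofReal_ne_top)),
      setIntegral_const, hQ, Ej_eq_dyadicAverage, dyadicAverage, smul_eq_mul]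
    field_simp
  calc |Ej n f x - f x| ≤ (2:ℝ) ^ (2 * n) * ∫ y in Q, ‖f y - f x‖ := by
        rw [hEj, abs_mul, abs_of_pos (by positivity)]
        gcongr
        exact norm_integral_le_integral_norm (fun y => f y - f x)
    _ ≤ (2:ℝ) ^ (2 * n) * ∫ y in B, ‖f y - f x‖ :=
        mul_le_mul_of_nonneg_left (setIntegral_mono_set hintB
          (ae_of_all _ fun _ => norm_nonneg _) hQB.eventuallyLE) (by positivity)
    _ = 4 * π * ⨍ y in B, ‖f y - f x‖ := by
        rw [setAverage_eq, smul_eq_mul, hB]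
        field_simp
    _ ≤ 16 * ⨍ y in B, ‖f y - f x‖ := by
        have : 0 ≤ ⨍ y in B, ‖f y - f x‖ := by
          rw [setAverage_eq, smul_eq_mul]
          exact mul_nonneg (by positivity) (integral_nonneg fun _ => norm_nonneg _)
        gcongr
        linarith [Real.pi_lt_four]

lemma ae_tendsto_Ej (hf : LocallyIntegrable f volume) :
    ∀ᵐ x, Tendsto (fun n => Ej n f x) atTop (𝓝 (f x)) := by
  filter_upwards [IsUnifLocDoublingMeasure.ae_tendsto_average_norm_sub volume hf 1] with x hx
  have hr : Tendsto (fun n : ℕ => (2:ℝ) / 2 ^ n) atTop (𝓝[>] 0) :=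
    tendsto_nhdsWithin_iff.2 ⟨tendsto_const_nhds.div_atTop
      (tendsto_pow_atTop_atTop_of_one_lt one_lt_two), Eventually.of_forall fun n => by
        simp only [mem_Ioi]; positivity⟩
  have havg := hx (fun _ => x) _ hr (Eventually.of_forall fun n => by
    rw [mem_closedBall, dist_self, one_mul]; positivity)
  rw [tendsto_iff_norm_sub_tendsto_zero]
  exact squeeze_zero (fun _ => norm_nonneg _) (fun n => abs_Ej_sub_le hf n x)
    (by simpa using havg.const_mul 16)

def squareSum (m n : ℕ) (f : P2 → ℝ) (x : P2) : ℝ := ∑ k ∈ Finset.Ico m n, Dk k f x ^ 2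

def expSupermartingale (θ : ℝ) (m n : ℕ) (f : P2 → ℝ) (x : P2) : ℝ :=
  Real.exp (θ * (Ej n f x - Ej m f x) - 4 * θ ^ 2 * squareSum m n f x)

lemma isDyadicMeasurable_squareSum (m n : ℕ) (f : P2 → ℝ) :
    IsDyadicMeasurable n (squareSum m n f) :=
  fun _ _ h => Finset.sum_congr rfl fun k hk => by
    rw [(isDyadicMeasurable_Dk k f).mono (Finset.mem_Ico.1 hk).2 h]

lemma isDyadicMeasurable_expSupermartingale (θ : ℝ) {m n N : ℕ} (hm : m ≤ N) (hn : n ≤ N)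
    (f : P2 → ℝ) : IsDyadicMeasurable N (expSupermartingale θ m n f) := fun x y h => by
  rw [expSupermartingale, expSupermartingale, (isDyadicMeasurable_Ej n f).mono hn h,
    (isDyadicMeasurable_Ej m f).mono hm h, (isDyadicMeasurable_squareSum m n f).mono hn h]

lemma expSupermartingale_succ (θ : ℝ) {m n : ℕ} (hmn : m ≤ n) (f : P2 → ℝ) (x : P2) :
    expSupermartingale θ m (n + 1) f x =
      expSupermartingale θ m n f x * expSupermartingale θ n (n + 1) f x := by
  simp only [expSupermartingale, squareSum, ← Real.exp_add, Finset.sum_Ico_succ_top hmn,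
    Nat.Ico_succ_singleton, Finset.sum_singleton]
  ring_nf

lemma setLIntegral_expSupermartingale_succ_le (hf : LocallyIntegrable f volume) (θ : ℝ) (n : ℕ)
    (c : ℤ × ℤ) :
    ∫⁻ x in dyadicSquare n c, ENNReal.ofReal (expSupermartingale θ n (n + 1) f x) ≤
      volume (dyadicSquare n c) := by
  set u : ℤ × ℤ → ℝ := fun d => θ * (dyadicAverage (n + 1) f d - dyadicAverage n f c)
  have hu : ∑ d ∈ dyadicChildren c, u d = 0 := by
    simp only [u, ← Finset.mul_sum, Finset.sum_sub_distrib, Finset.sum_const, card_dyadicChildren,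
      sum_dyadicAverage_children hf]
    ring
  have hval (d) (hd : d ∈ dyadicChildren c) (x) (hx : x ∈ dyadicSquare (n + 1) d) :
      ENNReal.ofReal (expSupermartingale θ n (n + 1) f x) =
        ENNReal.ofReal (Real.exp (u d - 4 * u d ^ 2)) := by
    simp only [expSupermartingale, squareSum, Nat.Ico_succ_singleton, Finset.sum_singleton]
    rw [← Dk, Dk_eq_of_mem_dyadicSquare hd hx]
    simp only [u]
    ring_nf
  calc ∫⁻ x in dyadicSquare n c, ENNReal.ofReal (expSupermartingale θ n (n + 1) f x)
      = ∑ d ∈ dyadicChildren c, ENNReal.ofReal (Real.exp (u d - 4 * u d ^ 2)) *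
          volume (dyadicSquare (n + 1) d) := by
        rw [dyadicSquare_eq_biUnion_children, lintegral_biUnion_finset
          (fun d _ d' _ h => pairwise_disjoint_dyadicSquare _ h)
          (fun d _ => measurableSet_dyadicSquare _ d)]
        refine Finset.sum_congr rfl fun d hd => ?_
        rw [setLIntegral_congr_fun (measurableSet_dyadicSquare _ d) (hval d hd),
          setLIntegral_const]
    _ = ENNReal.ofReal (∑ d ∈ dyadicChildren c, Real.exp (u d - 4 * u d ^ 2)) *
          ENNReal.ofReal ((2:ℝ) ^ (2 * (n + 1)))⁻¹ := by
        simp only [volume_dyadicSquare, ← Finset.sum_mul,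
          ENNReal.ofReal_sum_of_nonneg fun _ _ => (Real.exp_pos _).le]
    _ ≤ ENNReal.ofReal 4 * ENNReal.ofReal ((2:ℝ) ^ (2 * (n + 1)))⁻¹ := by
        gcongr
        simpa [card_dyadicChildren] using
          Real.sum_exp_sub_four_mul_sq_le_card _ (by rw [card_dyadicChildren]; norm_num) u hu
    _ = volume (dyadicSquare n c) := by
        rw [volume_dyadicSquare, ← ENNReal.ofReal_mul (by norm_num)]
        congr 1
        rw [mul_add, pow_add]
        ring

lemma lintegral_mul_expSupermartingale_succ_le (hf : LocallyIntegrable f volume) (θ : ℝ) {n : ℕ}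
    {G : P2 → ℝ≥0∞} (hG : IsDyadicMeasurable n G) :
    ∫⁻ x, G x * ENNReal.ofReal (expSupermartingale θ n (n + 1) f x) ≤ ∫⁻ x, G x := by
  rw [lintegral_eq_tsum_dyadicSquare n, lintegral_eq_tsum_dyadicSquare n]
  refine ENNReal.tsum_le_tsum fun c => ?_
  rcases (dyadicSquare n c).eq_empty_or_nonempty with hc | ⟨x₀, hx₀⟩
  · simp [hc]
  have hGc : ∀ x ∈ dyadicSquare n c, G x = G x₀ := fun x hx => hG (hx.trans hx₀.symm)
  have hmeas : Measurable fun x => ENNReal.ofReal (expSupermartingale θ n (n + 1) f x) :=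
    ENNReal.measurable_ofReal.comp
      (isDyadicMeasurable_expSupermartingale θ n.le_succ le_rfl f).measurable
  rw [setLIntegral_congr_fun (measurableSet_dyadicSquare n c) fun x hx => by rw [hGc x hx],
    setLIntegral_congr_fun (measurableSet_dyadicSquare n c) hGc, lintegral_const_mul _ hmeas,
    setLIntegral_const]
  gcongr
  exact setLIntegral_expSupermartingale_succ_le hf θ n c

lemma setLIntegral_expSupermartingale_le (hf : LocallyIntegrable f volume) (θ : ℝ) {m n : ℕ}
    (hmn : m ≤ n) {U : Set P2} (hU : IsDyadicMeasurable m (· ∈ U)) :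
    ∫⁻ x in U, ENNReal.ofReal (expSupermartingale θ m n f x) ≤ volume U := by
  induction n, hmn using Nat.le_induction with
  | base => simp [expSupermartingale, squareSum]
  | succ n hmn ih =>
    have hG : IsDyadicMeasurable n
        (U.indicator fun x => ENNReal.ofReal (expSupermartingale θ m n f x)) :=
      fun x y h => by
        classical
        simp only [indicator, isDyadicMeasurable_expSupermartingale θ hmn le_rfl f h]
        exact if_congr (Iff.of_eq (hU.mono hmn h)) rfl rfl
    calc ∫⁻ x in U, ENNReal.ofReal (expSupermartingale θ m (n + 1) f x)
        = ∫⁻ x, U.indicator (fun x => ENNReal.ofReal (expSupermartingale θ m n f x)) x *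
            ENNReal.ofReal (expSupermartingale θ n (n + 1) f x) := by
          rw [← lintegral_indicator hU.measurableSet]
          congr 1 with x
          by_cases hx : x ∈ U
          · have h0 : 0 ≤ expSupermartingale θ m n f x := (Real.exp_pos _).le
            simp [hx, expSupermartingale_succ θ hmn, ENNReal.ofReal_mul h0]
          · simp [hx]
      _ ≤ ∫⁻ x in U, ENNReal.ofReal (expSupermartingale θ m n f x) := by
          rw [← lintegral_indicator hU.measurableSet]
          exact lintegral_mul_expSupermartingale_succ_le hf θ hG
      _ ≤ volume U := ih

lemma squareSum_le_of_sqFn_lt {x : P2} {s : ℝ} (h : sqFn f x < ENNReal.ofReal s) (m n : ℕ) :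
    squareSum m n f x ≤ s ^ 2 := by
  have hs : 0 ≤ s := (ENNReal.ofReal_pos.1 (zero_le.trans_lt h)).le
  rw [sqFn, one_div, ENNReal.rpow_inv_lt_iff two_pos, ENNReal.rpow_two,
    ← ENNReal.ofReal_pow hs] at h
  have hle : ENNReal.ofReal (squareSum m n f x) ≤ ∑' k, (‖Dk k f x‖₊ : ℝ≥0∞) ^ 2 := by
    rw [squareSum, ENNReal.ofReal_sum_of_nonneg fun _ _ => sq_nonneg _]
    refine le_of_eq_of_le (Finset.sum_congr rfl fun k _ => ?_) (ENNReal.sum_le_tsum _)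
    rw [← enorm_eq_nnnorm, Real.enorm_eq_ofReal_abs, ← ENNReal.ofReal_pow (abs_nonneg _), sq_abs]
  exact ((ENNReal.ofReal_lt_ofReal_iff'.1 (hle.trans_lt h)).1).le

lemma abs_Dk_le_of_sqFn_lt {x : P2} {s : ℝ} (h : sqFn f x < ENNReal.ofReal s) (k : ℕ) :
    |Dk k f x| ≤ s := by
  have hs : 0 ≤ s := (ENNReal.ofReal_pos.1 (zero_le.trans_lt h)).le
  refine abs_le_of_sq_le_sq ?_ hs
  simpa [squareSum] using squareSum_le_of_sqFn_lt h k (k + 1)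

lemma Ej_neg (j : ℕ) (f : P2 → ℝ) : Ej j (-f) = -Ej j f := by
  ext x
  simp [Ej, integral_neg]

lemma squareSum_neg (m n : ℕ) (f : P2 → ℝ) : squareSum m n (-f) = squareSum m n f := by
  ext x
  simp only [squareSum, Dk, Ej_neg, Pi.neg_apply]
  exact Finset.sum_congr rfl fun _ _ => by ring

lemma volume_lt_sub_Ej_le (hf : LocallyIntegrable f volume) {m : ℕ} {U : Set P2}
    (hU : IsDyadicMeasurable m (· ∈ U)) {t s : ℝ} (ht : 0 < t) (hs : 0 < s) :
    volume (U ∩ {x | (∀ n, squareSum m n f x ≤ s ^ 2) ∧ t < f x - Ej m f x}) ≤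
      ENNReal.ofReal (Real.exp (-(t ^ 2 / (16 * s ^ 2)))) * volume U := by
  set S := U ∩ {x | (∀ n, squareSum m n f x ≤ s ^ 2) ∧ t < f x - Ej m f x}
  -- `θ` maximises `θ t - 4 θ² s²`, with maximum `c`.
  set θ := t / (8 * s ^ 2)
  set c := t ^ 2 / (16 * s ^ 2)
  have hc : θ * t - 4 * θ ^ 2 * s ^ 2 = c := by
    simp only [θ, c]
    field_simp
    ring
  have hS : NullMeasurableSet S := by
    simp only [S, Set.ofPred_and, Set.ofPred_forall]
    refine hU.measurableSet.nullMeasurableSet.inter ((MeasurableSet.iInter fun n =>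
      measurableSet_le (isDyadicMeasurable_squareSum m n f).measurable measurable_const
      ).nullMeasurableSet.inter ?_)
    exact nullMeasurableSet_lt aemeasurable_const
      (hf.aestronglyMeasurable.aemeasurable.sub (isDyadicMeasurable_Ej m f).measurable.aemeasurable)
  have hlim : ∀ᵐ x ∂volume.restrict S, ENNReal.ofReal (Real.exp c) ≤
      liminf (fun n => ENNReal.ofReal (expSupermartingale θ m n f x)) atTop := by
    filter_upwards [ae_restrict_mem₀ hS, ae_restrict_of_ae (ae_tendsto_Ej hf)] with x hxS hx
    refine le_liminf_of_le (by isBoundedDefault) ?_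
    filter_upwards [(hx.sub_const (Ej m f x)).eventually (lt_mem_nhds hxS.2.2)] with n hn
    rw [expSupermartingale, ← hc]
    gcongr
    exact hxS.2.1 n
  have hfatou : ENNReal.ofReal (Real.exp c) * volume S ≤ volume U :=
    calc ENNReal.ofReal (Real.exp c) * volume S = ∫⁻ _ in S, ENNReal.ofReal (Real.exp c) :=
          (setLIntegral_const _ _).symm
      _ ≤ ∫⁻ x in S, liminf (fun n => ENNReal.ofReal (expSupermartingale θ m n f x)) atTop :=
          lintegral_mono_ae hlim
      _ ≤ ∫⁻ x in U, liminf (fun n => ENNReal.ofReal (expSupermartingale θ m n f x)) atTop :=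
          lintegral_mono_set inter_subset_left
      _ ≤ liminf (fun n => ∫⁻ x in U, ENNReal.ofReal (expSupermartingale θ m n f x)) atTop :=
          lintegral_liminf_le fun n => ENNReal.measurable_ofReal.comp
            (isDyadicMeasurable_expSupermartingale θ (le_max_left m n) (le_max_right m n)
              f).measurable
      _ ≤ volume U := by
          refine liminf_le_of_frequently_le' (Eventually.frequently ?_)
          filter_upwards [eventually_ge_atTop m] with n hn
          exact setLIntegral_expSupermartingale_le hf θ hn hU
  calc volume S = ENNReal.ofReal (Real.exp (-c)) * (ENNReal.ofReal (Real.exp c) * volume S) := by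
        rw [← mul_assoc, ← ENNReal.ofReal_mul (Real.exp_pos _).le, ← Real.exp_add,
          neg_add_cancel, Real.exp_zero, ENNReal.ofReal_one, one_mul]
    _ ≤ ENNReal.ofReal (Real.exp (-c)) * volume U := by gcongr

lemma volume_lt_abs_sub_Ej_le (hf : LocallyIntegrable f volume) {m : ℕ} {U : Set P2}
    (hU : IsDyadicMeasurable m (· ∈ U)) {t s : ℝ} (ht : 0 < t) (hs : 0 < s) :
    volume (U ∩ {x | (∀ n, squareSum m n f x ≤ s ^ 2) ∧ t < |f x - Ej m f x|}) ≤
      ENNReal.ofReal (2 * Real.exp (-(t ^ 2 / (16 * s ^ 2)))) * volume U := by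
  have hsplit : U ∩ {x | (∀ n, squareSum m n f x ≤ s ^ 2) ∧ t < |f x - Ej m f x|} ⊆
      U ∩ {x | (∀ n, squareSum m n f x ≤ s ^ 2) ∧ t < f x - Ej m f x} ∪
      U ∩ {x | (∀ n, squareSum m n (-f) x ≤ s ^ 2) ∧ t < (-f) x - Ej m (-f) x} := by
    rintro x ⟨hxU, hsq, hlt⟩
    simp only [squareSum_neg, Ej_neg]
    rcases lt_abs.1 hlt with h | h
    · exact .inl ⟨hxU, hsq, h⟩
    · exact .inr ⟨hxU, hsq, by simpa [neg_add_eq_sub] using h⟩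
  calc _ ≤ _ := measure_mono hsplit
    _ ≤ _ := measure_union_le _ _
    _ ≤ _ := add_le_add (volume_lt_sub_Ej_le hf hU ht hs) (volume_lt_sub_Ej_le hf.neg hU ht hs)
    _ = _ := by
      rw [← add_mul, ENNReal.ofReal_mul zero_le_two, ENNReal.ofReal_ofNat, two_mul]

def firstExit (f : P2 → ℝ) (s : ℝ) (m : ℕ) : Set P2 :=
  {x | s < |Ej m f x| ∧ ∀ j < m, |Ej j f x| ≤ s}

lemma isDyadicMeasurable_firstExit (f : P2 → ℝ) (s : ℝ) (m : ℕ) :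
    IsDyadicMeasurable m (· ∈ firstExit f s m) := fun x y h => by
  have hE : ∀ j ≤ m, Ej j f x = Ej j f y := fun j hj => (isDyadicMeasurable_Ej j f).mono hj h
  simp only [firstExit, mem_ofPred_eq, hE m le_rfl]
  exact propext (and_congr_right' (forall₂_congr fun j hj => by rw [hE j hj.le]))

lemma pairwise_disjoint_firstExit (f : P2 → ℝ) (s : ℝ) :
    Pairwise (Function.onFun Disjoint (firstExit f s)) := by
  refine (pairwise_disjoint_on _).2 fun m n hmn => disjoint_left.2 fun x hm hn => ?_
  exact (hn.2 m hmn).not_gt hm.1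

lemma mem_iUnion_firstExit {s : ℝ} {x : P2} :
    x ∈ ⋃ m, firstExit f s m ↔ ∃ k, s < |Ej k f x| := by
  refine ⟨fun h => ?_, fun h => ?_⟩
  · obtain ⟨m, hm, _⟩ := mem_iUnion.1 h
    exact ⟨m, hm⟩
  · classical
    exact mem_iUnion.2 ⟨Nat.find h, Nat.find_spec h, fun j hj => not_lt.1 (Nat.find_min h hj)⟩

lemma iUnion_firstExit {s : ℝ} (hs : 0 ≤ s) :
    ⋃ m, firstExit f s m = {x | ENNReal.ofReal s < ⨆ k, (‖Ej k f x‖₊ : ℝ≥0∞)} := by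
  ext x
  simp only [mem_iUnion_firstExit, mem_ofPred_eq, lt_iSup_iff, ← enorm_eq_nnnorm,
    Real.enorm_eq_ofReal_abs, ENNReal.ofReal_lt_ofReal_iff_of_nonneg hs]

lemma volume_maximal_eq_tsum_firstExit {s : ℝ} (hs : 0 ≤ s) :
    volume {x | ENNReal.ofReal s < ⨆ k, (‖Ej k f x‖₊ : ℝ≥0∞)} = ∑' m, volume (firstExit f s m) := by
  rw [← iUnion_firstExit hs, measure_iUnion (pairwise_disjoint_firstExit f s)
    fun m => (isDyadicMeasurable_firstExit f s m).measurableSet]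

lemma exists_lt_abs_Ej {x : P2} {s : ℝ} (hx : Tendsto (fun n => Ej n f x) atTop (𝓝 (f x)))
    (h : 2 * s < |f x - Ej 0 f x|) : ∃ k, s < |Ej k f x| := by
  by_contra! hle
  have hfx : |f x| ≤ s := le_of_tendsto (hx.abs) (Eventually.of_forall hle)
  linarith [abs_sub (f x) (Ej 0 f x), hle 0]

lemma lt_abs_sub_Ej_of_mem_firstExit {x : P2} {lam s : ℝ} {m : ℕ} (h3s : 3 * s ≤ lam)
    (hA : 2 * lam < |f x - Ej 0 f x|) (hD : ∀ k, |Dk k f x| ≤ s) (hx : x ∈ firstExit f s m) :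
    lam < |f x - Ej m f x| := by
  have hs : 0 ≤ s := (abs_nonneg _).trans (hD 0)
  have hEm : |Ej m f x - Ej 0 f x| ≤ 3 * s := by
    cases m with
    | zero => rw [sub_self, abs_zero]; linarith
    | succ k =>
      have hk := hx.2 k k.lt_succ_self
      have h0 := hx.2 0 k.succ_pos
      have hsplit : Ej (k + 1) f x - Ej 0 f x = Dk k f x + (Ej k f x - Ej 0 f x) := by
        rw [Dk]; ring
      rw [hsplit]
      linarith [abs_add_le (Dk k f x) (Ej k f x - Ej 0 f x), abs_sub (Ej k f x) (Ej 0 f x), hD k]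
  have := abs_sub_abs_le_abs_sub (f x - Ej 0 f x) (Ej m f x - Ej 0 f x)
  rw [sub_sub_sub_cancel_right] at this
  linarith

lemma volume_le_volume_maximal (hf : LocallyIntegrable f volume) {lam s : ℝ} (hs : 0 ≤ s)
    (hslam : s ≤ lam) :
    volume {x | 2 * lam < |f x - Ej 0 f x| ∧ sqFn f x < ENNReal.ofReal s} ≤
      volume {x | ENNReal.ofReal s < ⨆ k, (‖Ej k f x‖₊ : ℝ≥0∞)} := by
  refine measure_mono_ae ?_
  filter_upwards [ae_tendsto_Ej hf] with x hx hxA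
  rw [← iUnion_firstExit hs]
  exact mem_iUnion_firstExit.2 (exists_lt_abs_Ej hx (by linarith [hxA.1]))

theorem volume_le_exp_mul_volume_maximal (hf : LocallyIntegrable f volume) {lam s : ℝ}
    (hs : 0 < s) (h3s : 3 * s ≤ lam) :
    volume {x | 2 * lam < |f x - Ej 0 f x| ∧ sqFn f x < ENNReal.ofReal s} ≤
      ENNReal.ofReal (2 * Real.exp (-(lam ^ 2 / (16 * s ^ 2)))) *
        volume {x | ENNReal.ofReal s < ⨆ k, (‖Ej k f x‖₊ : ℝ≥0∞)} := by
  have hcover : {x | 2 * lam < |f x - Ej 0 f x| ∧ sqFn f x < ENNReal.ofReal s} ≤ᵐ[volume]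
      ⋃ m, firstExit f s m ∩
        {x | (∀ n, squareSum m n f x ≤ s ^ 2) ∧ lam < |f x - Ej m f x|} := by
    filter_upwards [ae_tendsto_Ej hf] with x hx hxA
    obtain ⟨m, hm⟩ := mem_iUnion.1 (mem_iUnion_firstExit.2
      (exists_lt_abs_Ej (s := s) hx (by linarith [hxA.1])))
    exact mem_iUnion.2 ⟨m, hm, squareSum_le_of_sqFn_lt hxA.2 m,
      lt_abs_sub_Ej_of_mem_firstExit h3s hxA.1 (abs_Dk_le_of_sqFn_lt hxA.2) hm⟩
  calc _ ≤ _ := measure_mono_ae hcover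
    _ ≤ _ := measure_iUnion_le _
    _ ≤ ∑' m, ENNReal.ofReal (2 * Real.exp (-(lam ^ 2 / (16 * s ^ 2)))) *
          volume (firstExit f s m) := ENNReal.tsum_le_tsum fun m =>
        volume_lt_abs_sub_Ej_le hf (isDyadicMeasurable_firstExit f s m) (by linarith) hs
    _ = _ := by rw [ENNReal.tsum_mul_left, volume_maximal_eq_tsum_firstExit hs.le]

end ChangWilsonWolff

/-- **The Chang–Wilson–Wolff inequality.** There are constants `c₁, c₂ > 0` such that
for every `f ∈ L²(ℝ²)`, every `λ > 0` and every `0 < ε < 1`,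
`|{x : |f(x) − E₀f(x)| > 2λ, Δ(f)(x) < ελ}| ≤ c₂ e^{−c₁/ε²} |{x : sup_{k≥0} |E_k f(x)| > ελ}|`. -/
theorem chang_wilson_wolff :
    ∃ c₁ c₂ : ℝ, 0 < c₁ ∧ 0 < c₂ ∧
      ∀ f : P2 → ℝ, MemLp f 2 volume →
      ∀ lam : ℝ, 0 < lam → ∀ ε : ℝ, 0 < ε → ε < 1 →
        volume {x : P2 | 2 * lam < |f x - Ej 0 f x| ∧ sqFn f x < ENNReal.ofReal (ε * lam)} ≤
          ENNReal.ofReal (c₂ * Real.exp (-c₁ / ε ^ 2)) *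
            volume {x : P2 | ENNReal.ofReal (ε * lam) < ⨆ k : ℕ, (‖Ej k f x‖₊ : ℝ≥0∞)} := by
  refine ⟨1 / 16, 2 * Real.exp (9 / 16), by norm_num, by positivity, ?_⟩
  intro f hf lam hlam ε hε hε1
  have hfl : LocallyIntegrable f volume := hf.locallyIntegrable (by norm_num)
  have hs : 0 < ε * lam := by positivity
  rcases le_or_gt ε (1 / 3) with hε3 | hε3
  · refine (ChangWilsonWolff.volume_le_exp_mul_volume_maximal hfl hs (by nlinarith)).trans ?_
    have hexp : lam ^ 2 / (16 * (ε * lam) ^ 2) = 1 / 16 / ε ^ 2 := by field_simp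
    rw [hexp, ← neg_div]
    gcongr
    exact le_mul_of_one_le_right zero_le_two (Real.one_le_exp (by norm_num))
  · refine (ChangWilsonWolff.volume_le_volume_maximal hfl hs.le (by nlinarith)).trans
      (le_mul_of_one_le_left zero_le (ENNReal.one_le_ofReal.2 ?_))
    have hε2 : (1 / 16) / ε ^ 2 ≤ 9 / 16 := by
      rw [div_le_iff₀ (by positivity)]
      nlinarith
    have : 1 ≤ Real.exp (9 / 16) * Real.exp (-(1 / 16) / ε ^ 2) := by
      rw [← Real.exp_add]
      exact Real.one_le_exp (by rw [neg_div]; linarith)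
    linarith
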